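/- arXiv:2512.07354 — 6 statements merged into one kernel-verified Lean document; each statement's English description precedes it below -/
import Mathlib

section
/- If f ∈ F_{q^2}[x] is irreducible over F_{q^2} and equals its conjugate polynomial f̄ (coefficientwise q-th power), then all coefficients of f lie in F_q and the degree of f is odd. -/
open Polynomial

lemma aux_card_le {L : Type*} [Field L] [Fintype L] [DecidableEq L] {N : ℕ} (hN : 2 ≤ N)
    (h : ∀ x : L, x ^ N = x) : Fintype.card L ≤ N := by
  have hP : (X ^ N - X : L[X]) ≠ 0 := by
    intro h0
    have h1 := congrArg (fun P => Polynomial.coeff P N) h0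
    simp only [coeff_sub, coeff_X_pow, if_pos rfl, coeff_zero] at h1
    rw [Polynomial.coeff_X, if_neg (by omega : ¬ (1 = N))] at h1
    norm_num at h1
  have hdeg : (X ^ N - X : L[X]).natDegree = N := by
    rw [natDegree_sub_eq_left_of_natDegree_lt] <;>
      simp only [natDegree_X_pow, natDegree_X]
    omega
  have hsub : (Finset.univ : Finset L) ⊆ (X ^ N - X : L[X]).roots.toFinset := by
    intro x _
    rw [Multiset.mem_toFinset, mem_roots hP]
    simp [IsRoot, h x, sub_eq_zero]
  calc Fintype.card L = (Finset.univ : Finset L).card := rfl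
    _ ≤ (X ^ N - X : L[X]).roots.toFinset.card := Finset.card_le_card hsub
    _ ≤ Multiset.card (X ^ N - X : L[X]).roots := Multiset.toFinset_card_le _
    _ ≤ (X ^ N - X : L[X]).natDegree := Polynomial.card_roots' _
    _ = N := hdeg

theorem stmt_4 (p k q : ℕ) (hp : p.Prime) (hq : q = p ^ k)
    (F : Type*) [Field F] [Fintype F] (hF : Fintype.card F = q ^ 2)
    (f : Polynomial F) (hf : Irreducible f)
    (hconj : ∀ i, f.coeff i = (f.coeff i) ^ q) :
    (∀ i, (f.coeff i) ^ q = f.coeff i) ∧ Odd f.natDegree := by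
  classical
  haveI : Fact p.Prime := ⟨hp⟩
  refine ⟨fun i => (hconj i).symm, ?_⟩
  -- basic numerics
  have hcardF : 1 < Fintype.card F := Fintype.one_lt_card
  have hq2 : 2 ≤ q := by
    have h1 : 1 < q ^ 2 := hF ▸ hcardF
    nlinarith
  have hk : k ≠ 0 := by rintro rfl; simp at hq; omega
  -- characteristic
  haveI : CharP F (ringChar F) := ringChar.charP F
  obtain ⟨n, hrprime, hcard'⟩ := FiniteField.card F (ringChar F)
  have hpr : ringChar F = p := by
    have hdvd : p ∣ ringChar F ^ (n : ℕ) := by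
      rw [← hcard', hF, hq]
      exact dvd_pow (dvd_pow_self p hk) (by omega)
    exact ((Nat.prime_dvd_prime_iff_eq hp hrprime).mp
      (hp.dvd_of_dvd_pow hdvd)).symm
  haveI hcharF : CharP F p := by rw [← hpr]; exact ringChar.charP F
  -- the extension L
  have hf0 : f ≠ 0 := hf.ne_zero
  haveI : Fact (Irreducible f) := ⟨hf⟩
  set L := AdjoinRoot f with hL
  set d := f.natDegree with hd
  have hd1 : 1 ≤ d := hf.natDegree_pos
  let pb := AdjoinRoot.powerBasis hf0
  haveI : Fintype L := Module.fintypeOfFintype pb.basis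
  have hcardL : Fintype.card L = (q ^ 2) ^ d := by
    rw [Module.card_eq_pow_finrank (K := F) (V := L), hF, pb.finrank, AdjoinRoot.powerBasis_dim]
  haveI : CharP L p := charP_of_injective_algebraMap (algebraMap F L).injective p
  set α : L := AdjoinRoot.root f with hα
  let φ : L →+* L := iterateFrobenius L p k
  have hφ : ∀ x : L, φ x = x ^ q := fun x => by rw [hq]; exact iterateFrobenius_def p k x
  -- the map fixes the image of the coefficients of f
  have hfix : ∀ i, (algebraMap F L (f.coeff i)) ^ q = algebraMap F L (f.coeff i) := by
    intro i
    rw [← map_pow, ← hconj i]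
  set fm : L[X] := f.map (algebraMap F L) with hfm
  have hfm0 : fm ≠ 0 := by
    simpa [hfm] using (Polynomial.map_ne_zero_iff (algebraMap F L).injective).mpr hf0
  have hfmfix : fm.map φ = fm := by
    ext i
    rw [coeff_map, hfm, coeff_map, hφ, hfix]
  -- every α ^ q ^ j is a root of fm
  have hroot : ∀ j : ℕ, fm.eval (α ^ q ^ j) = 0 := by
    intro j
    induction j with
    | zero =>
      rw [hfm, AdjoinRoot.algebraMap_eq, pow_zero, pow_one]
      exact AdjoinRoot.isRoot_root f
    | succ j ih =>
      have h1 : α ^ q ^ (j + 1) = φ (α ^ q ^ j) := by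
        rw [hφ, ← pow_mul, pow_succ]
      rw [h1, ← hfmfix, eval_map, Polynomial.eval₂_hom, ih, map_zero]
  -- pigeonhole: two of α, α^q, ..., α^(q^d) coincide
  have hmem : ∀ j : ℕ, α ^ q ^ j ∈ fm.roots.toFinset := by
    intro j
    rw [Multiset.mem_toFinset, mem_roots hfm0]
    exact hroot j
  have hcardroots : fm.roots.toFinset.card ≤ d := by
    calc fm.roots.toFinset.card ≤ Multiset.card fm.roots := Multiset.toFinset_card_le _
      _ ≤ fm.natDegree := Polynomial.card_roots' _
      _ = d := by rw [hfm, natDegree_map]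
  have hninj : ¬ Function.Injective
      (fun j : Fin (d + 1) => (⟨α ^ q ^ (j : ℕ), hmem j⟩ : fm.roots.toFinset)) := by
    intro hinj
    have := Fintype.card_le_of_injective _ hinj
    rw [Fintype.card_coe, Fintype.card_fin] at this
    omega
  have hex : ∃ i j : ℕ, i < j ∧ j ≤ d ∧ α ^ q ^ i = α ^ q ^ j := by
    rw [Function.not_injective_iff] at hninj
    obtain ⟨a, b, hab, hne⟩ := hninj
    have hab' : α ^ q ^ (a : ℕ) = α ^ q ^ (b : ℕ) := congrArg Subtype.val hab
    rcases lt_or_gt_of_ne (fun h => hne (Fin.ext h)) with h | h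
    · exact ⟨a, b, h, by omega, hab'⟩
    · exact ⟨b, a, h, by omega, hab'.symm⟩
  -- cancellation using injectivity of φ
  have hφinj : Function.Injective φ := φ.injective
  have hcancel : ∀ i j : ℕ, i < j → α ^ q ^ i = α ^ q ^ j → α = α ^ q ^ (j - i) := by
    intro i
    induction i with
    | zero => intro j _ h; simpa using h
    | succ i ih =>
      intro j hij h
      obtain ⟨j', rfl⟩ : ∃ j', j = j' + 1 := ⟨j - 1, by omega⟩
      have h1 : ∀ m : ℕ, α ^ q ^ (m + 1) = φ (α ^ q ^ m) := by
        intro m; rw [hφ, ← pow_mul, pow_succ]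
      rw [h1, h1] at h
      have h2 := hφinj h
      have := ih j' (by omega) h2
      simpa using this
  obtain ⟨i, j, hij, hjd, hij'⟩ := hex
  set e := j - i with he
  have he1 : 1 ≤ e := by omega
  have hed : e ≤ d := by omega
  have hαe : α ^ q ^ e = α := (hcancel i j hij hij').symm
  -- key counting argument
  have main : ∀ m : ℕ, 1 ≤ m → α ^ q ^ m = α → (∀ c : F, c ^ q ^ m = c) →
      (q ^ 2) ^ d ≤ q ^ m := by
    intro m hm hαm hc
    have hqm2 : 2 ≤ q ^ m := le_trans hq2 (Nat.le_self_pow (by omega) q)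
    have hqmp : q ^ m = p ^ (k * m) := by rw [hq, ← pow_mul]
    let T : Subalgebra F L :=
      { carrier := {x : L | x ^ q ^ m = x}
        mul_mem' := by
          intro a b ha hb
          simp only [Set.mem_setOf_eq] at *
          rw [mul_pow, ha, hb]
        one_mem' := by simp
        add_mem' := by
          intro a b ha hb
          simp only [Set.mem_setOf_eq] at *
          rw [hqmp, add_pow_char_pow, ← hqmp, ha, hb]
        zero_mem' := by simp [zero_pow (by positivity : q ^ m ≠ 0)]
        algebraMap_mem' := by
          intro c
          simp only [Set.mem_setOf_eq]
          rw [← map_pow, hc c] }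
    have hT : ∀ x : L, x ∈ T := by
      have h1 : Algebra.adjoin F {α} ≤ T := by
        rw [Algebra.adjoin_le_iff]
        intro x hx
        rw [Set.mem_singleton_iff] at hx
        subst hx
        exact hαm
      rw [AdjoinRoot.adjoinRoot_eq_top] at h1
      intro x
      exact h1 (by trivial)
    have hall : ∀ x : L, x ^ q ^ m = x := fun x => hT x
    have := aux_card_le hqm2 hall
    rw [hcardL] at this
    exact this
  -- first: e = d
  have hcF2 : ∀ (c : F) (m : ℕ), c ^ q ^ (2 * m) = c := by
    intro c m
    have : q ^ (2 * m) = (q ^ 2) ^ m := by rw [← pow_mul]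
    rw [this, ← hF]
    exact FiniteField.pow_card_pow m c
  have hα2e : α ^ q ^ (2 * e) = α := by
    have : q ^ (2 * e) = q ^ e * q ^ e := by rw [← pow_add]; ring_nf
    rw [this, pow_mul, hαe, hαe]
  have hde : (q ^ 2) ^ d ≤ q ^ (2 * e) := main (2 * e) (by omega) hα2e (fun c => hcF2 c e)
  have hed' : d ≤ e := by
    have h1 : (q ^ 2) ^ d = q ^ (2 * d) := by rw [← pow_mul]
    rw [h1] at hde
    have := (Nat.pow_le_pow_iff_right (by omega : 1 < q)).mp hde
    omega
  have heq : e = d := le_antisymm hed hed'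
  -- now suppose d is even
  by_contra hodd
  rw [Nat.not_odd_iff_even] at hodd
  obtain ⟨m', hm'⟩ := hodd
  have hαd : α ^ q ^ d = α := heq ▸ hαe
  have hcFd : ∀ c : F, c ^ q ^ d = c := by
    intro c
    have : d = 2 * m' := by omega
    rw [this]
    exact hcF2 c m'
  have hdd : (q ^ 2) ^ d ≤ q ^ d := main d hd1 hαd hcFd
  have h1 : (q ^ 2) ^ d = q ^ (2 * d) := by rw [← pow_mul]
  rw [h1] at hdd
  have := (Nat.pow_le_pow_iff_right (by omega : 1 < q)).mp hdd
  omega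
end

section
/- Let f ∈ F_{q^2}[x] be irreducible with f* = f̄ (the reciprocal of f equals the conjugate of f). Then deg(f) is odd, and for any root α of f one has α⁻¹ = α^{q^{deg f}}. -/
/-!
Work in `𝔽_{q²}(α) = AdjoinRoot f`, where the Frobenius `x ↦ x ^ q²` is an `F`-automorphism of
order `n = deg f` and every root of `f` is a conjugate `α ^ q ^ (2j)`. The hypothesis `f* = f̄`
says that `α ^ q` is a root of the reciprocal polynomial, so `α⁻¹ ^ q = α ^ q ^ (2j)`;
cancelling one `q`-th power gives `α ^ q ^ t = α⁻¹` with `t` odd. Applying this twice,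
`α ^ q ^ (2t) = α`, hence `n ∣ t`: so `n` is odd and `α ^ q ^ n = α ^ q ^ t = α⁻¹`.
-/

open Polynomial

namespace Polynomial

theorem ne_zero_of_aeval_eq_zero_of_coeff_zero_ne_zero {R L : Type*} [CommRing R] [Field L]
    [Algebra R L] [FaithfulSMul R L] {f : R[X]} {α : L} (h0 : f.coeff 0 ≠ 0)
    (hα : aeval α f = 0) : α ≠ 0 := by
  rintro rfl
  simp_all [aeval_def]

theorem aeval_reverse_eq_zero_iff {R L : Type*} [CommRing R] [Field L] [Algebra R L]
    {f : R[X]} {β : L} (hβ : β ≠ 0) : aeval β f.reverse = 0 ↔ aeval β⁻¹ f = 0 := by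
  let _ : Invertible β⁻¹ := invertibleOfNonzero (inv_ne_zero hβ)
  simpa [aeval_def] using eval₂_reverse_eq_zero_iff (algebraMap R L) β⁻¹ f

theorem aeval_pow_map_iterateFrobenius {R L : Type*} [CommSemiring R] [CommSemiring L]
    [Algebra R L] (p k : ℕ) [ExpChar R p] [ExpChar L p] (f : R[X]) (α : L) :
    aeval (α ^ p ^ k) (f.map (iterateFrobenius R p k)) = aeval α f ^ p ^ k := by
  have hcomm : (algebraMap R L).comp (iterateFrobenius R p k) =
      (iterateFrobenius L p k).comp (algebraMap R L) := by
    ext a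
    simp [iterateFrobenius_def]
  rw [aeval_def, eval₂_map, hcomm, ← iterateFrobenius_def, ← hom_eval₂, iterateFrobenius_def,
    aeval_def]

theorem aeval_inv_pow_eq_zero_of_mul_reverse_eq_map {F L : Type*} [Field F] [Field L]
    [Algebra F L] (p k : ℕ) [ExpChar F p] [ExpChar L p] {f : F[X]} {c : F} (hc : c ≠ 0)
    (hconj : C c * f.reverse = f.map (iterateFrobenius F p k)) {α : L} (hα : aeval α f = 0)
    (hα0 : α ≠ 0) : aeval (α ^ p ^ k)⁻¹ f = 0 := by
  have h := aeval_pow_map_iterateFrobenius p k f α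
  rw [hα, zero_pow (expChar_pow_pos F p k).ne', ← hconj, map_mul, aeval_C, mul_eq_zero] at h
  rw [← aeval_reverse_eq_zero_iff (pow_ne_zero _ hα0)]
  exact h.resolve_left (by simpa using hc)

end Polynomial

namespace AdjoinRoot

variable {F : Type*} [Field F] [Fintype F] {f : F[X]} [Fact (Irreducible f)]

instance : Module.Finite F (AdjoinRoot f) :=
  (powerBasis (Fact.out : Irreducible f).ne_zero).finite

instance : Finite (AdjoinRoot f) := Module.finite_of_finite F

theorem root_pow_card_pow_eq_root_iff (m : ℕ) :
    root f ^ Fintype.card F ^ m = root f ↔ f.natDegree ∣ m := by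
  have hdeg : f.natDegree = orderOf (FiniteField.frobeniusAlgHom F (AdjoinRoot f)) := by
    rw [FiniteField.orderOf_frobeniusAlgHom]
    exact finrank_quotient_span_eq_natDegree.symm
  rw [hdeg, orderOf_dvd_iff_pow_eq_one]
  constructor
  · intro h
    ext
    simpa [AlgHom.coe_pow, FiniteField.coe_frobeniusAlgHom, pow_iterate] using h
  · intro h
    simpa [AlgHom.coe_pow, FiniteField.coe_frobeniusAlgHom, pow_iterate] using congr($h (root f))

theorem exists_eq_root_pow_card_pow {β : AdjoinRoot f} (hβ : aeval β f = 0) :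
    ∃ j, β = root f ^ Fintype.card F ^ j := by
  obtain ⟨j, hj⟩ := (FiniteField.bijective_frobeniusAlgHom_pow F (AdjoinRoot f)).2
    (liftAlgHom f (Algebra.ofId F _) β hβ)
  refine ⟨j, (liftAlgHom_root f _ β hβ).symm.trans ?_⟩
  rw [← hj]
  simp [AlgHom.coe_pow, FiniteField.coe_frobeniusAlgHom, pow_iterate]

variable {q : ℕ}

theorem root_pow_pow_two_mul_eq_root_iff (hF : Fintype.card F = q ^ 2) (m : ℕ) :
    root f ^ q ^ (2 * m) = root f ↔ f.natDegree ∣ m := by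
  rw [pow_mul, ← hF, root_pow_card_pow_eq_root_iff]

theorem exists_odd_root_pow_eq_inv (p k : ℕ) [ExpChar (AdjoinRoot f) p]
    (hF : Fintype.card F = q ^ 2) (hq : q = p ^ k) (h : aeval (root f ^ q)⁻¹ f = 0) :
    ∃ t, Odd t ∧ root f ^ q ^ t = (root f)⁻¹ := by
  obtain ⟨j, hj⟩ := exists_eq_root_pow_card_pow h
  rw [hF, ← pow_mul] at hj
  rcases j with _ | i
  · exact ⟨1, odd_one, by simpa [inv_eq_iff_eq_inv] using hj⟩
  · refine ⟨2 * i + 1, odd_two_mul_add_one i, iterateFrobenius_inj (AdjoinRoot f) p k ?_⟩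
    rw [iterateFrobenius_def, iterateFrobenius_def, ← hq, ← pow_mul, ← pow_succ, inv_pow, hj]
    ring_nf

theorem odd_natDegree_of_root_pow_eq_inv (hF : Fintype.card F = q ^ 2) {t : ℕ} (ht : Odd t)
    (h : root f ^ q ^ t = (root f)⁻¹) :
    Odd f.natDegree ∧ (root f)⁻¹ = root f ^ q ^ f.natDegree := by
  have h2t : root f ^ q ^ (2 * t) = root f := by
    rw [two_mul, pow_add, pow_mul, h, inv_pow, h, inv_inv]
  obtain ⟨s, rfl⟩ := (root_pow_pow_two_mul_eq_root_iff hF t).1 h2t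
  obtain ⟨hn, i, rfl⟩ := Nat.odd_mul.1 ht
  refine ⟨hn, ?_⟩
  have hfix : root f ^ q ^ (2 * (f.natDegree * i)) = root f :=
    (root_pow_pow_two_mul_eq_root_iff hF _).2 (dvd_mul_right _ _)
  rw [← h, mul_add, mul_one, pow_add, pow_mul, ← mul_assoc, mul_comm f.natDegree 2, mul_assoc,
    hfix]

end AdjoinRoot

theorem stmt_5 (p k q : ℕ) (hp : p.Prime) (hq : q = p ^ k)
    (F L : Type*) [Field F] [Fintype F] [Field L] [Algebra F L]
    (hF : Fintype.card F = q ^ 2)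
    (f : Polynomial F) (hf : Irreducible f) (h0 : f.coeff 0 ≠ 0)
    (hrc : ∀ i, (Polynomial.C (f.coeff 0)⁻¹ * f.reverse).coeff i = (f.coeff i) ^ q) :
    Odd f.natDegree ∧
      ∀ α : L, Polynomial.aeval α f = 0 → α⁻¹ = α ^ q ^ f.natDegree := by
  have : Fact p.Prime := ⟨hp⟩
  have : CharP F p := charP_of_card_eq_prime_pow (f := k * 2) (by rw [hF, hq, pow_mul])
  have : Fact (Irreducible f) := ⟨hf⟩
  have : ExpChar (AdjoinRoot f) p := expChar_of_injective_algebraMap (algebraMap F _).injective p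
  have hconj : C (f.coeff 0)⁻¹ * f.reverse = f.map (iterateFrobenius F p k) := by
    ext i
    rw [hrc, coeff_map, iterateFrobenius_def, hq]
  have hroot : aeval (AdjoinRoot.root f) f = 0 := by rw [AdjoinRoot.aeval_eq, AdjoinRoot.mk_self]
  have hinv_root : aeval (AdjoinRoot.root f ^ q)⁻¹ f = 0 := hq ▸
    aeval_inv_pow_eq_zero_of_mul_reverse_eq_map p k (inv_ne_zero h0) hconj hroot
      (ne_zero_of_aeval_eq_zero_of_coeff_zero_ne_zero h0 hroot)
  obtain ⟨t, ht, hpow⟩ := AdjoinRoot.exists_odd_root_pow_eq_inv p k hF hq hinv_root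
  obtain ⟨hodd, hinv⟩ := AdjoinRoot.odd_natDegree_of_root_pow_eq_inv hF ht hpow
  refine ⟨hodd, fun α hα => ?_⟩
  rw [← AdjoinRoot.liftAlgHom_root f (Algebra.ofId F L) α hα, ← map_inv₀, hinv, map_pow]
end

section
/- Let q be an odd prime power, r a positive integer, and ξ a primitive element of F_{q^{2r}}. Then for x ∈ F_{q^{2r}}, x = -x^{q^r} holds if and only if x = 0 or x = ξ^{(2k+1)(q^r+1)/2} for some k ∈ {0, 1, ..., q^r - 2}. In particular, the number of solutions of x = -x^{q^r} in F_{q^{2r}} is q^r. -/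
theorem stmt_9 (q r : ℕ) (hq : Odd q) (hr : 0 < r)
    (F : Type*) [Field F] [Fintype F] (hF : Fintype.card F = q ^ (2 * r))
    (ξ : F) (hξ : orderOf ξ = q ^ (2 * r) - 1) :
    (∀ x : F, x = -(x ^ q ^ r) ↔
        x = 0 ∨ ∃ k < q ^ r - 1, x = ξ ^ ((2 * k + 1) * ((q ^ r + 1) / 2))) ∧
      Nat.card {x : F // x = -(x ^ q ^ r)} = q ^ r := by
  classical
  set n := q ^ r with hn
  set s := (n + 1) / 2 with hs
  -- basic numerics
  have hq1 : q ≠ 1 := by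
    rintro rfl
    simp at hF
    have := Fintype.one_lt_card (α := F)
    omega
  have hq3 : 3 ≤ q := by obtain ⟨t, rfl⟩ := hq; omega
  have hn3 : 3 ≤ n := le_trans hq3 (Nat.le_self_pow hr.ne' q)
  have hnodd : Odd n := hq.pow
  obtain ⟨t, ht⟩ := hnodd
  have hst : s = t + 1 := by omega
  have h2s : 2 * s = n + 1 := by omega
  have hsq : q ^ (2 * r) = n ^ 2 := by
    rw [hn, ← pow_mul, mul_comm r 2]
  have hNfac : n ^ 2 - 1 = 2 * (s * (n - 1)) := by
    have h : n ^ 2 = 2 * (s * (n - 1)) + 1 := by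
      have hn1 : n - 1 = 2 * t := by omega
      rw [hn1, hst, ht]; ring
    omega
  have h9 : 3 * 3 ≤ n ^ 2 := by rw [pow_two]; exact Nat.mul_le_mul hn3 hn3
  have hNpos : 0 < n ^ 2 - 1 := by omega
  have hspos : 0 < s := by omega
  have hfac2 : (n + 1) * (n - 1) = n ^ 2 - 1 := by
    rw [hNfac, ← h2s, mul_assoc]
  have hN : orderOf ξ = n ^ 2 - 1 := by rw [hξ, hsq]
  have hξ0 : ξ ≠ 0 := by
    intro h
    have h1 := pow_orderOf_eq_one ξ
    rw [hN, h, zero_pow hNpos.ne'] at h1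
    exact zero_ne_one h1
  -- ξ ^ (s * (n-1)) = -1
  have hneg : ξ ^ (s * (n - 1)) = -1 := by
    have hmul : ξ ^ (s * (n - 1)) * ξ ^ (s * (n - 1)) = 1 := by
      rw [← pow_add]
      have : s * (n - 1) + s * (n - 1) = n ^ 2 - 1 := by rw [hNfac]; ring
      rw [this, ← hN, pow_orderOf_eq_one]
    rcases mul_self_eq_one_iff.mp hmul with h1 | h1
    · exfalso
      have hdvd := orderOf_dvd_of_pow_eq_one h1
      rw [hN, hNfac] at hdvd
      have hc : 0 < s * (n - 1) := Nat.mul_pos hspos (by omega)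
      have := Nat.le_of_dvd hc hdvd
      omega
    · exact h1
  -- the unit
  set u : Fˣ := Units.mk0 ξ hξ0 with hu
  have huc : (u : F) = ξ := rfl
  have huord : orderOf u = n ^ 2 - 1 := by
    rw [← orderOf_units, huc, hN]
  have hcardU : Nat.card Fˣ = n ^ 2 - 1 := by
    rw [Nat.card_eq_fintype_card, Fintype.card_units, hF, hsq]
  have htop : ∀ y : Fˣ, y ∈ Subgroup.zpowers u := by
    intro y
    have : Subgroup.zpowers u = ⊤ := by
      rw [← Subgroup.card_eq_iff_eq_top, Nat.card_zpowers, huord, hcardU]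
    rw [this]; trivial
  -- key characterization of nonzero solutions: x ^ (n-1) = -1
  have hpow_char : ∀ x : F, x ≠ 0 → (x = -(x ^ n) ↔ x ^ (n - 1) = -1) := by
    intro x hx0
    constructor
    · intro hx
      have hxn : x ^ n = -x := by linear_combination hx
      have : x ^ (n - 1) * x = -1 * x := by
        rw [← pow_succ, show n - 1 + 1 = n by omega, hxn]; ring
      exact mul_right_cancel₀ hx0 this
    · intro hx
      have : x ^ n = -x := by
        rw [show n = n - 1 + 1 by omega, pow_succ, hx]; ring
      rw [this, neg_neg]
  -- upper bound for exponents
  have hexp_lt : ∀ k, k < n - 1 → (2 * k + 1) * s < n ^ 2 - 1 := by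
    intro k hk
    have : (2 * k + 1) * s < 2 * (n - 1) * s := by
      refine (Nat.mul_lt_mul_right ?_).mpr ?_ <;> omega
    calc (2 * k + 1) * s < 2 * (n - 1) * s := this
      _ = 2 * (s * (n - 1)) := by ring
      _ = n ^ 2 - 1 := hNfac.symm
  -- the main iff
  have key : ∀ x : F, x = -(x ^ n) ↔
      x = 0 ∨ ∃ k < n - 1, x = ξ ^ ((2 * k + 1) * s) := by
    intro x
    constructor
    · intro hx
      by_cases hx0 : x = 0
      · exact Or.inl hx0
      · right
        have hpm1 : x ^ (n - 1) = -1 := (hpow_char x hx0).mp hx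
        -- write x as a power of ξ
        set ux : Fˣ := Units.mk0 x hx0 with hux
        obtain ⟨m, hm⟩ := mem_powers_iff_mem_zpowers.mpr (htop ux)
        have hxm : x = ξ ^ m := by
          have := congrArg (Units.val) hm
          simpa [hux, huc] using this.symm
        -- reduce m mod the order
        have hxm' : x = ξ ^ (m % (n ^ 2 - 1)) := by
          rw [hxm, ← hN, pow_mod_orderOf]
        set m' := m % (n ^ 2 - 1) with hm'
        have hm'lt : m' < n ^ 2 - 1 := Nat.mod_lt _ hNpos
        -- u ^ (m' * (n-1)) = u ^ (s * (n-1))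
        have hueq : u ^ (m' * (n - 1)) = u ^ (s * (n - 1)) := by
          apply Units.ext
          push_cast [huc]
          rw [pow_mul, ← hxm', hpm1, hneg]
        have hmod : m' * (n - 1) ≡ s * (n - 1) [MOD n ^ 2 - 1] := by
          rwa [pow_eq_pow_iff_modEq, huord] at hueq
        have hmod2 : m' ≡ s [MOD 2 * s] := by
          apply Nat.ModEq.mul_right_cancel' (c := n - 1) (by omega)
          have hmm : 2 * s * (n - 1) = n ^ 2 - 1 := by rw [hNfac, mul_assoc]
          rwa [hmm]
        have hsmod : m' % (n + 1) = s := by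
          have h1 : m' % (2 * s) = s % (2 * s) := hmod2
          have h2 : s % (2 * s) = s := Nat.mod_eq_of_lt (by omega)
          rw [← h2s, h1, h2]
        set k := m' / (n + 1) with hk
        have hmeq : m' = (n + 1) * k + s := by
          have hdm := Nat.div_add_mod m' (n + 1)
          rw [hsmod] at hdm
          exact hdm.symm
        have hklt : k < n - 1 := by
          by_contra hge
          push_neg at hge
          have h1 : (n + 1) * (n - 1) ≤ (n + 1) * k := Nat.mul_le_mul_left _ hge
          omega
        refine ⟨k, hklt, ?_⟩
        rw [hxm']
        congr 1
        rw [hmeq, ← h2s]; ring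
    · rintro (rfl | ⟨k, hk, rfl⟩)
      · simp [zero_pow (show n ≠ 0 by omega)]
      · set x := ξ ^ ((2 * k + 1) * s) with hx
        have hx0 : x ≠ 0 := pow_ne_zero _ hξ0
        apply (hpow_char x hx0).mpr
        rw [hx, ← pow_mul]
        have : (2 * k + 1) * s * (n - 1) = (n ^ 2 - 1) * k + s * (n - 1) := by
          rw [hNfac]; ring
        rw [this, pow_add, pow_mul, ← hN, pow_orderOf_eq_one, one_pow, one_mul, hneg]
  constructor
  · intro x
    rw [key x]
  · -- counting
    set S : Finset F :=
      insert 0 ((Finset.range (n - 1)).image fun k => ξ ^ ((2 * k + 1) * s)) with hS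
    have hfilter : Finset.univ.filter (fun x : F => x = -(x ^ q ^ r)) = S := by
      ext x
      simp only [Finset.mem_filter, Finset.mem_univ, true_and, hS, Finset.mem_insert,
        Finset.mem_image, Finset.mem_range]
      rw [key x]
      constructor
      · rintro (h | ⟨k, hk, h⟩)
        · exact Or.inl h
        · exact Or.inr ⟨k, hk, h.symm⟩
      · rintro (h | ⟨k, hk, h⟩)
        · exact Or.inl h
        · exact Or.inr ⟨k, hk, h.symm⟩
    have hcard : S.card = n := by
      rw [hS, Finset.card_insert_of_notMem, Finset.card_image_of_injOn]
      · rw [Finset.card_range]; omega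
      · intro k1 h1 k2 h2 heq
        simp only [Finset.coe_range, Set.mem_Iio] at h1 h2
        have hu12 : u ^ ((2 * k1 + 1) * s) = u ^ ((2 * k2 + 1) * s) := by
          apply Units.ext; push_cast [huc]; exact heq
        have := (pow_eq_pow_iff_modEq.mp hu12)
        rw [huord] at this
        have he : (2 * k1 + 1) * s = (2 * k2 + 1) * s := by
          have l1 := hexp_lt k1 h1
          have l2 := hexp_lt k2 h2
          have := this.eq_of_lt_of_lt l1 l2
          exact this
        have := Nat.eq_of_mul_eq_mul_right hspos he
        omega
      · intro h0
        simp only [Finset.mem_image, Finset.mem_range] at h0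
        obtain ⟨k, hk, hkeq⟩ := h0
        exact pow_ne_zero _ hξ0 hkeq
    rw [Nat.card_eq_fintype_card, Fintype.card_subtype, hfilter, hcard]
end

section
/- Let q be an odd prime power, r a positive integer, and ξ a primitive element of F_{q^{2r}}. Then for x ∈ F_{q^{2r}}, x = -x^{-q^r} holds if and only if x = ξ^{(2k+1)(q^r-1)/2} for some k ∈ {0, 1, ..., q^r}. In particular, the equation x = -x^{-q^r} has exactly q^r + 1 solutions in F_{q^{2r}}. -/
theorem stmt_10 (q r : ℕ) (hq : Odd q) (hr : 0 < r)
    (F : Type*) [Field F] [Fintype F] (hF : Fintype.card F = q ^ (2 * r))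
    (ξ : F) (hξ : orderOf ξ = q ^ (2 * r) - 1) :
    (∀ x : F, x ≠ 0 →
        (x = -(x ^ q ^ r)⁻¹ ↔
          ∃ k ≤ q ^ r, x = ξ ^ ((2 * k + 1) * ((q ^ r - 1) / 2)))) ∧
      Nat.card {x : F // x ≠ 0 ∧ x = -(x ^ q ^ r)⁻¹} = q ^ r + 1 := by
  have hq1 : 1 < q := by
    rcases Nat.lt_or_ge q 2 with h | h
    · interval_cases q
      · simp [Nat.odd_iff] at hq
      · exfalso
        have h2 := Fintype.one_lt_card (α := F)
        rw [hF] at h2; simp at h2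
    · omega
  set s := q ^ r with hs
  have hs1 : 1 < s := Nat.one_lt_pow hr.ne' hq1
  have hsodd : Odd s := hq.pow
  obtain ⟨t, ht⟩ := hsodd
  have ht1 : 1 ≤ t := by omega
  have hss : q ^ (2 * r) = s * s := by rw [two_mul, pow_add]
  have hssn : s * s = 2 * t * (s + 1) + 1 := by rw [ht]; ring
  have hn : q ^ (2 * r) - 1 = 2 * t * (s + 1) := by omega
  have hord : orderOf ξ = 2 * t * (s + 1) := by rw [hξ, hn]
  have hnpos : 0 < 2 * t * (s + 1) := by positivity
  have hξ0 : ξ ≠ 0 := by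
    intro h
    have h1 : ξ ^ (2 * t * (s + 1)) = 1 := by rw [← hord]; exact pow_orderOf_eq_one ξ
    rw [h, zero_pow hnpos.ne'] at h1
    exact zero_ne_one h1
  have hdiv : (s - 1) / 2 = t := by omega
  -- the unit corresponding to ξ
  set ζ : Fˣ := Units.mk0 ξ hξ0 with hζ
  have hordζ : orderOf ζ = 2 * t * (s + 1) := by
    rw [← orderOf_units]; exact hord
  -- every nonzero element is a natural power of ξ
  have hexists : ∀ x : F, x ≠ 0 → ∃ m : ℕ, x = ξ ^ m := by
    intro x hx
    have htop : Subgroup.zpowers ζ = ⊤ := by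
      apply Subgroup.eq_top_of_card_eq
      rw [Nat.card_zpowers, hordζ, Nat.card_units, Nat.card_eq_fintype_card, hF, hss]
      omega
    have hmem : Units.mk0 x hx ∈ Submonoid.powers ζ := by
      rw [mem_powers_iff_mem_zpowers, htop]; trivial
    obtain ⟨m, hm⟩ := hmem
    refine ⟨m, ?_⟩
    have := congrArg Units.val hm
    simpa [ζ] using this.symm
  -- powers of ξ agree iff exponents agree mod the order
  have hpow_iff : ∀ a b : ℕ, ξ ^ a = ξ ^ b ↔ a ≡ b [MOD 2 * t * (s + 1)] := by
    intro a b
    rw [← hordζ, ← pow_eq_pow_iff_modEq]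
    constructor
    · intro h; ext; simpa [ζ] using h
    · intro h; have := congrArg Units.val h; simpa [ζ] using this
  -- ξ^(t(s+1)) = -1
  have hhalf : ξ ^ (t * (s + 1)) = -1 := by
    have hsq : ξ ^ (t * (s + 1)) * ξ ^ (t * (s + 1)) = 1 := by
      rw [← pow_add, show t * (s + 1) + t * (s + 1) = 2 * t * (s + 1) by ring,
        ← hord, pow_orderOf_eq_one]
    rcases mul_self_eq_one_iff.mp hsq with h | h
    · exfalso
      have hdvd := orderOf_dvd_of_pow_eq_one h
      rw [hord] at hdvd
      have hle := Nat.le_of_dvd (by positivity) hdvd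
      nlinarith
    · exact h
  -- reformulation of the equation
  have hA : ∀ x : F, x ≠ 0 → (x = -(x ^ s)⁻¹ ↔ x ^ (s + 1) = -1) := by
    intro x hx
    have hxs : x ^ s ≠ 0 := pow_ne_zero _ hx
    rw [pow_succ]
    constructor
    · intro h
      nth_rewrite 2 [h]
      rw [mul_neg, mul_inv_cancel₀ hxs]
    · intro h
      have := congrArg (fun y => (x ^ s)⁻¹ * y) h
      simp only [← mul_assoc, inv_mul_cancel₀ hxs, one_mul, mul_neg, mul_one] at this
      exact this
  -- solutions are exactly the ξ^((2k+1)t)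
  have hB : ∀ x : F, x ≠ 0 →
      (x ^ (s + 1) = -1 ↔ ∃ k ≤ s, x = ξ ^ ((2 * k + 1) * t)) := by
    intro x hx
    constructor
    · intro h
      obtain ⟨m, hm⟩ := hexists x hx
      have hmod : m * (s + 1) ≡ t * (s + 1) [MOD 2 * t * (s + 1)] := by
        rw [← hpow_iff, pow_mul, ← hm, h, hhalf]
      have hmod2 : m ≡ t [MOD 2 * t] := Nat.ModEq.mul_right_cancel' (by omega) hmod
      have hmt : m % (2 * t) = t := by
        have h6 := hmod2.symm
        unfold Nat.ModEq at h6
        rw [Nat.mod_eq_of_lt (by omega)] at h6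
        omega
      obtain ⟨j, hmval⟩ : ∃ j, m = 2 * t * j + t := by
        refine ⟨m / (2 * t), ?_⟩
        have h5 := Nat.div_add_mod m (2 * t)
        omega
      have hjlt : j % (s + 1) < s + 1 := Nat.mod_lt _ (by omega)
      refine ⟨j % (s + 1), by omega, ?_⟩
      rw [hm, hpow_iff, hmval,
        show (2 * (j % (s + 1)) + 1) * t = 2 * t * (j % (s + 1)) + t by ring]
      exact (((Nat.mod_modEq j (s + 1)).mul_left' (2 * t)).add_right t).symm
    · rintro ⟨k, hk, rfl⟩
      rw [← pow_mul, show (2 * k + 1) * t * (s + 1) = t * (s + 1) * (2 * k + 1) by ring,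
        pow_mul, hhalf]
      exact Odd.neg_one_pow ⟨k, by ring⟩
  -- main equivalence
  have hmain : ∀ x : F, x ≠ 0 →
      (x = -(x ^ s)⁻¹ ↔ ∃ k ≤ s, x = ξ ^ ((2 * k + 1) * t)) := by
    intro x hx
    rw [hA x hx, hB x hx]
  constructor
  · intro x hx
    rw [hdiv]
    exact hmain x hx
  · -- counting
    have hne : ∀ k : ℕ, ξ ^ ((2 * k + 1) * t) ≠ 0 := fun k => pow_ne_zero _ hξ0
    have key : Nat.card {x : F // x ≠ 0 ∧ x = -(x ^ s)⁻¹} = Nat.card (Fin (s + 1)) := by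
      symm
      apply Nat.card_eq_of_bijective (fun k : Fin (s + 1) =>
        (⟨ξ ^ ((2 * (k : ℕ) + 1) * t), hne k,
          (hmain _ (hne k)).mpr ⟨k, Nat.lt_succ_iff.mp k.isLt, rfl⟩⟩ :
          {x : F // x ≠ 0 ∧ x = -(x ^ s)⁻¹}))
      constructor
      · intro a b hab
        have h1 : ξ ^ ((2 * (a : ℕ) + 1) * t) = ξ ^ ((2 * (b : ℕ) + 1) * t) :=
          congrArg Subtype.val hab
        rw [hpow_iff] at h1
        have h2 : (2 * (a : ℕ) + 1) * t ≡ (2 * (b : ℕ) + 1) * t [MOD (2 * (s + 1)) * t] := by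
          rw [show 2 * (s + 1) * t = 2 * t * (s + 1) by ring]; exact h1
        have h3 := Nat.ModEq.mul_right_cancel' (show t ≠ 0 by omega) h2
        have ha : (a : ℕ) < s + 1 := a.isLt
        have hb : (b : ℕ) < s + 1 := b.isLt
        have h4 : (2 * (a : ℕ) + 1) % (2 * (s + 1)) = (2 * (b : ℕ) + 1) % (2 * (s + 1)) := h3
        rw [Nat.mod_eq_of_lt (by omega), Nat.mod_eq_of_lt (by omega)] at h4
        ext
        omega
      · rintro ⟨x, hx0, hxeq⟩
        obtain ⟨k, hk, hkx⟩ := (hmain x hx0).mp hxeq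
        exact ⟨⟨k, by omega⟩, Subtype.ext hkx.symm⟩
    rw [key]
    simp
end

section
/- For a finite group G and a left ideal I of the group algebra F_q[G], the set I^{⊥_E} := {b ∈ F_q[G] : (a|b)_E = 0 for all a ∈ I}, where (Σ a_g g | Σ b_g g)_E := Σ_g a_g b_g, is again a left ideal of F_q[G]. -/
/-!
The euclidean form is not invariant under left multiplication, but it admits an adjoint:
`(a | r b)_E = (r* a | b)_E`, where `r*` is the coefficient-reversing involution
`r*(g) = r(g⁻¹)`. Hence if `b ⊥ I` and `a ∈ I`, then `(a | r b)_E = (r* a | b)_E = 0`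
because `r* a ∈ I`, so `I^⊥` is closed under left multiplication.
-/

namespace MonoidAlgebra

variable {k G : Type*} [CommSemiring k] [Group G]

def invCoeff (r : MonoidAlgebra k G) : MonoidAlgebra k G :=
  ofCoeff (Finsupp.equivMapDomain (Equiv.inv G) r.coeff)

@[simp]
lemma coeff_invCoeff (r : MonoidAlgebra k G) (g : G) : (invCoeff r).coeff g = r.coeff g⁻¹ := by
  simp [invCoeff, Finsupp.equivMapDomain_apply]

variable [Fintype G]

lemma coeff_mul_eq_sum (x y : MonoidAlgebra k G) (g : G) :
    (x * y).coeff g = ∑ h : G, x.coeff h * y.coeff (h⁻¹ * g) := by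
  rw [coeff_mul_apply_left]
  exact Finsupp.sum_fintype _ _ fun _ ↦ zero_mul _

def euclideanForm (a b : MonoidAlgebra k G) : k :=
  ∑ g : G, a.coeff g * b.coeff g

lemma euclideanForm_zero_right (a : MonoidAlgebra k G) : euclideanForm a 0 = 0 := by
  simp [euclideanForm]

lemma euclideanForm_add_right (a b c : MonoidAlgebra k G) :
    euclideanForm a (b + c) = euclideanForm a b + euclideanForm a c := by
  simp [euclideanForm, mul_add, Finset.sum_add_distrib]

lemma euclideanForm_mul_right (a r b : MonoidAlgebra k G) :
    euclideanForm a (r * b) = euclideanForm (invCoeff r * a) b := by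
  calc euclideanForm a (r * b)
      = ∑ h : G, ∑ g : G, r.coeff h * a.coeff g * b.coeff (h⁻¹ * g) := by
        simp only [euclideanForm, coeff_mul_eq_sum, Finset.mul_sum]
        rw [Finset.sum_comm]
        exact Finset.sum_congr rfl fun _ _ ↦ Finset.sum_congr rfl fun _ _ ↦ by ring
    _ = ∑ h : G, ∑ g : G, r.coeff h * a.coeff (h * g) * b.coeff g := by
        refine Finset.sum_congr rfl fun h _ ↦ ?_
        exact Fintype.sum_equiv (Equiv.mulLeft h⁻¹) _ _ fun g ↦ by simp
    _ = ∑ g : G, ∑ h : G, r.coeff h⁻¹ * a.coeff (h⁻¹ * g) * b.coeff g := by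
        rw [Finset.sum_comm]
        refine Finset.sum_congr rfl fun g _ ↦ ?_
        exact Fintype.sum_equiv (Equiv.inv G) _ _ fun h ↦ by simp
    _ = euclideanForm (invCoeff r * a) b := by
        simp only [euclideanForm, coeff_mul_eq_sum, coeff_invCoeff, Finset.sum_mul]

def euclideanOrthogonal (I : Ideal (MonoidAlgebra k G)) : Ideal (MonoidAlgebra k G) where
  carrier := {b | ∀ a ∈ I, euclideanForm a b = 0}
  zero_mem' a _ := euclideanForm_zero_right a
  add_mem' hb hc a ha := by rw [euclideanForm_add_right, hb a ha, hc a ha, add_zero]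
  smul_mem' r _ hb a ha := by
    rw [smul_eq_mul, euclideanForm_mul_right]
    exact hb _ (I.mul_mem_left _ ha)

lemma mem_euclideanOrthogonal {I : Ideal (MonoidAlgebra k G)} {b : MonoidAlgebra k G} :
    b ∈ euclideanOrthogonal I ↔ ∀ a ∈ I, euclideanForm a b = 0 :=
  Iff.rfl

end MonoidAlgebra

theorem stmt_12_general (F : Type*) [Field F]
    (G : Type*) [Group G] [Fintype G]
    (I : Ideal (MonoidAlgebra F G)) :
    ∃ J : Ideal (MonoidAlgebra F G),
      ∀ b : MonoidAlgebra F G,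
        b ∈ J ↔ ∀ a ∈ I, ∑ g : G, a.coeff g * b.coeff g = 0 :=
  ⟨MonoidAlgebra.euclideanOrthogonal I, fun _ ↦ MonoidAlgebra.mem_euclideanOrthogonal⟩

theorem stmt_12 (F : Type*) [Field F] [Fintype F]
    (G : Type*) [Group G] [Fintype G]
    (I : Ideal (MonoidAlgebra F G)) :
    ∃ J : Ideal (MonoidAlgebra F G),
      ∀ b : MonoidAlgebra F G,
        b ∈ J ↔ ∀ a ∈ I, ∑ g : G, a.coeff g * b.coeff g = 0 :=
  stmt_12_general F G I
end

section
/- Let G be a finite group, I a left ideal of F_q[G], and let b ↦ b̂ be the F_q-linear map sending Σ b_g g to Σ b_g g⁻¹. Then the euclidean dual I^{⊥_E} equals {b̂ : b ∈ Ann_r(I)}, where Ann_r(I) = {b ∈ F_q[G] : ab = 0 for all a ∈ I} is the right annihilator of I. -/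
/-! The euclidean pairing is a coefficient of a product, `(a | b)_E = (a * b̂)_1`, and
`(a * b̂)_x = (x⁻¹ a | b)_E`. Since a left ideal is stable under `a ↦ x⁻¹ a`, the pairing vanishes
on `I` exactly when all coefficients of `a * b̂` do, i.e. when `b̂ ∈ Ann_r(I)`. -/

namespace MonoidAlgebra

variable {R G : Type*} [Semiring R] [Group G]

/-- The paper's `b̂`. -/
noncomputable def invDomain (b : MonoidAlgebra R G) : MonoidAlgebra R G :=
  ofCoeff (b.coeff.equivMapDomain (Equiv.inv G))

@[simp]
lemma coeff_invDomain (b : MonoidAlgebra R G) (g : G) : (invDomain b).coeff g = b.coeff g⁻¹ := by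
  simp [invDomain, Finsupp.equivMapDomain_apply]

lemma coeff_mul_one_eq_sum [Fintype G] (a c : MonoidAlgebra R G) :
    (a * c).coeff 1 = ∑ g : G, a.coeff g * c.coeff g⁻¹ := by
  rw [coeff_mul_apply_left, Finsupp.sum_fintype _ _ (fun _ ↦ zero_mul _)]
  simp only [mul_one]

lemma sum_coeff_mul_coeff_eq_coeff_mul_invDomain [Fintype G] (a b : MonoidAlgebra R G) :
    ∑ g : G, a.coeff g * b.coeff g = (a * invDomain b).coeff 1 := by
  simp [coeff_mul_one_eq_sum]

lemma coeff_mul_invDomain [Fintype G] (a b : MonoidAlgebra R G) (x : G) :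
    (a * invDomain b).coeff x = ∑ g : G, (single x⁻¹ 1 * a).coeff g * b.coeff g := by
  rw [sum_coeff_mul_coeff_eq_coeff_mul_invDomain, mul_assoc, coeff_single_mul_apply, inv_inv,
    mul_one, one_mul]

end MonoidAlgebra

open MonoidAlgebra

theorem stmt_13_general (F : Type*) [Field F]
    (G : Type*) [Group G] [Fintype G]
    (I : Ideal (MonoidAlgebra F G)) :
    ∀ b : MonoidAlgebra F G,
      ((∀ a ∈ I, ∑ g : G, a.coeff g * b.coeff g = 0) ↔
        ∃ c : MonoidAlgebra F G, (∀ a ∈ I, a * c = 0) ∧ ∀ g : G, b.coeff g = c.coeff g⁻¹) := by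
  intro b
  constructor
  · intro hb
    refine ⟨invDomain b, fun a ha ↦ ?_, fun g ↦ by simp⟩
    ext x
    rw [coeff_mul_invDomain, hb _ (I.mul_mem_left _ ha), coeff_zero, Finsupp.zero_apply]
  · rintro ⟨c, hc, hbc⟩ a ha
    have hc_eq : c = invDomain b := by ext g; simp [hbc]
    rw [sum_coeff_mul_coeff_eq_coeff_mul_invDomain, ← hc_eq, hc a ha, coeff_zero,
      Finsupp.zero_apply]

theorem stmt_13 (F : Type*) [Field F] [Fintype F]
    (G : Type*) [Group G] [Fintype G]
    (I : Ideal (MonoidAlgebra F G)) :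
    ∀ b : MonoidAlgebra F G,
      ((∀ a ∈ I, ∑ g : G, a.coeff g * b.coeff g = 0) ↔
        ∃ c : MonoidAlgebra F G, (∀ a ∈ I, a * c = 0) ∧ ∀ g : G, b.coeff g = c.coeff g⁻¹) :=
  stmt_13_general F G I
end
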